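/- arXiv:2111.02095 — 8 statements merged into one kernel-verified Lean document; each statement's English description precedes it below -/
import Mathlib

section
/- Let p be a prime and let R be a commutative local integral domain of characteristic p, with maximal ideal m, such that the residue field R/m is infinite. For c ∈ R let g_c : R → R denote the map g_c(x) = x^p − c^(p−1)·x. Suppose there exists an integer n ≥ 2 with the following (Baldwin–Saxl) property: for any c_1, …, c_n ∈ R there is an index i such that the intersection of the images g_{c_j}(R) over all j ≠ i is contained in the image g_{c_i}(R). Then the Artin–Schreier map x ↦ x^p − x is a surjection from R onto R. -/
/-!
Write `γ = c ^ (p - 1)`, so that `g_c(y) = y ^ p - γ * y`. Modulo the additive group `g_c(R)` we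
have `y ^ p ≡ γ * y`, hence an additive polynomial `P(x) = ∑ w_k x ^ p ^ k` whose coefficients and
`γ` are deep enough `p`-th powers satisfies `P(x) ≡ r * x` for a "remainder" `r`. If `P` is chosen
with `P(R) ⊆ g_{c_j}(R)` for all `j ≠ i` and the Baldwin–Saxl property gives
`P(R) ⊆ g_{c_i}(R)`, then `r * R ⊆ g_{c_i}(R)`, so `g_{c_i}` and with it the Artin–Schreier map
are onto as soon as `r` and `c_i` are units.

Such polynomials are built one `c_m` at a time: `P(r ^ (p - 1) * z ^ p - γ * z)` still maps into
every `g_{c_j}(R)` that `P` maps into, and also into `g_{c_m}(R)`, because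
`r * (r ^ (p - 1) * z ^ p - γ * z) = g_{c_m}(r * z)`. Keeping one polynomial for each omitted index
`i`, all the remainders involved are, up to a `p`-power, values of fixed polynomials at `γ`;
taking `c_m = t ^ p ^ N` with the residue of `t` avoiding their finitely many roots in the infinite
residue field makes all of them units.
-/

open Finset Polynomial

namespace ArtinSchreier

variable {R : Type*} [CommRing R]

section AdditivePolynomial

variable (p : ℕ)

def addPolyEval (K : ℕ) (w : ℕ → R) (x : R) : R := ∑ k ∈ range (K + 1), w k * x ^ p ^ k

/-- `remExp p k = p + p ^ 2 + ⋯ + p ^ k`. -/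
def remExp : ℕ → ℕ
  | 0 => 0
  | k + 1 => p * (remExp k + 1)

/-- If `γ = c ^ (p - 1)` and `r * x` is the remainder of the additive polynomial with
coefficients `w` modulo `g_c(R)` (see `exists_remainder`), then `r ^ p ^ K` is the value of
`remainderPoly p w K` at `γ`. -/
noncomputable def remainderPoly (w : ℕ → R) : ℕ → R[X]
  | 0 => C (w 0)
  | K + 1 => remainderPoly w K ^ p + C (w (K + 1)) * X ^ remExp p (K + 1)

/-- The remainder at `δ` of the extension `extendCoeff p γ r w`, as a polynomial in `γ`. -/
noncomputable def crossPoly (w : ℕ → R) (K : ℕ) (δ : R) : R[X] :=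
  C (δ ^ p ^ (K + 1) * (remainderPoly p w K).eval δ) * remainderPoly p w K ^ (p - 1) -
    C ((remainderPoly p w K).eval δ ^ p) * X ^ p ^ (K + 1)

def shiftCoeff (a : R) (w : ℕ → R) : ℕ → R
  | 0 => 0
  | k + 1 => a ^ p ^ k * w k

def scaleCoeff (γ : R) (w : ℕ → R) (k : ℕ) : R := γ ^ p ^ k * w k

def extendCoeff (γ r : R) (w : ℕ → R) : ℕ → R :=
  shiftCoeff p (r ^ (p - 1)) w - scaleCoeff p γ w

variable {p}

theorem remExp_succ' (k : ℕ) : remExp p (k + 1) = remExp p k + p ^ (k + 1) := by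
  induction k with
  | zero => simp [remExp]
  | succ k ih =>
    change p * (remExp p (k + 1) + 1) = p * (remExp p k + 1) + p ^ (k + 2)
    rw [ih]
    ring

theorem sub_one_mul_remExp_add (hp : 0 < p) (K : ℕ) :
    (p - 1) * remExp p K + p = p ^ (K + 1) := by
  induction K with
  | zero => simp [remExp]
  | succ K ih =>
    rw [remExp, pow_succ, ← ih]
    obtain ⟨q, rfl⟩ := Nat.exists_eq_add_of_lt hp
    simp only [Nat.add_sub_cancel]
    ring

theorem addPolyEval_sub (K : ℕ) (w u : ℕ → R) (x : R) :
    addPolyEval p K (w - u) x = addPolyEval p K w x - addPolyEval p K u x := by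
  simp only [addPolyEval, Pi.sub_apply, sub_mul, sum_sub_distrib]

theorem addPolyEval_shiftCoeff (K : ℕ) (a : R) (w : ℕ → R) (z : R) :
    addPolyEval p (K + 1) (shiftCoeff p a w) z = addPolyEval p K w (a * z ^ p) := by
  simp only [addPolyEval, sum_range_succ' _ (K + 1), shiftCoeff, mul_pow, ← pow_mul, ← pow_succ',
    zero_mul, add_zero]
  exact sum_congr rfl fun _ _ => by ring

theorem addPolyEval_scaleCoeff (K : ℕ) (γ : R) (w : ℕ → R) (z : R) :
    addPolyEval p K (scaleCoeff p γ w) z = addPolyEval p K w (γ * z) := by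
  simp only [addPolyEval, scaleCoeff, mul_pow]
  exact sum_congr rfl fun _ _ => by ring

theorem addPolyEval_succ_of_eq_zero {K : ℕ} {w : ℕ → R} (hw : w (K + 1) = 0) (x : R) :
    addPolyEval p (K + 1) w x = addPolyEval p K w x := by
  rw [addPolyEval, sum_range_succ, hw, zero_mul, add_zero, addPolyEval]

@[simp]
theorem eval_remainderPoly_zero (w : ℕ → R) (δ : R) : (remainderPoly p w 0).eval δ = w 0 := by
  simp [remainderPoly]

theorem eval_remainderPoly_succ (w : ℕ → R) (K : ℕ) (δ : R) :
    (remainderPoly p w (K + 1)).eval δ =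
      (remainderPoly p w K).eval δ ^ p + δ ^ remExp p (K + 1) * w (K + 1) := by
  simp only [remainderPoly, eval_add, eval_pow, eval_mul, eval_C, eval_X]
  ring

theorem eval_remainderPoly_scaleCoeff (γ : R) (w : ℕ → R) (K : ℕ) (δ : R) :
    (remainderPoly p (scaleCoeff p γ w) K).eval δ = γ ^ p ^ K * (remainderPoly p w K).eval δ := by
  induction K with
  | zero => simp [scaleCoeff]
  | succ K ih => rw [eval_remainderPoly_succ, ih, eval_remainderPoly_succ, scaleCoeff]; ring

theorem natDegree_remainderPoly_le (w : ℕ → R) (K : ℕ) :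
    (remainderPoly p w K).natDegree ≤ remExp p K := by
  induction K with
  | zero => simp [remainderPoly, remExp]
  | succ K ih =>
    refine natDegree_add_le_of_degree_le ((natDegree_pow_le_of_le p ih).trans ?_)
      (natDegree_C_mul_X_pow_le _ _)
    rw [remExp]
    exact Nat.mul_le_mul_left p (Nat.le_succ _)

theorem coeff_remainderPoly_remExp (hp : 0 < p) (w : ℕ → R) (K : ℕ) :
    (remainderPoly p w K).coeff (remExp p K) = w K := by
  cases K with
  | zero => simp [remainderPoly, remExp]
  | succ K =>
    have hlt : (remainderPoly p w K ^ p).natDegree < remExp p (K + 1) := by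
      refine (natDegree_pow_le_of_le p (natDegree_remainderPoly_le w K)).trans_lt ?_
      rw [remExp]
      exact Nat.mul_lt_mul_of_pos_left (Nat.lt_succ_self _) hp
    rw [remainderPoly, coeff_add, coeff_eq_zero_of_natDegree_lt hlt, coeff_C_mul_X_pow,
      if_pos rfl, zero_add]

theorem remainderPoly_ne_zero (hp : 0 < p) {w : ℕ → R} {K : ℕ} (hw : w K ≠ 0) :
    remainderPoly p w K ≠ 0 := fun h =>
  hw (by rw [← coeff_remainderPoly_remExp hp w K, h, coeff_zero])

theorem crossPoly_ne_zero (hp : 0 < p) {w : ℕ → R} {K : ℕ} {δ : R}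
    (h : (remainderPoly p w K).eval δ ^ p ≠ 0) : crossPoly p w K δ ≠ 0 := by
  have hlt : (remainderPoly p w K ^ (p - 1)).natDegree < p ^ (K + 1) := by
    refine (natDegree_pow_le_of_le _ (natDegree_remainderPoly_le w K)).trans_lt ?_
    rw [← sub_one_mul_remExp_add hp]
    omega
  intro h0
  have := congrArg (coeff · (p ^ (K + 1))) h0
  simp only [crossPoly, coeff_sub, coeff_C_mul, coeff_eq_zero_of_natDegree_lt hlt,
    coeff_X_pow_self, coeff_zero] at this
  exact h (by simpa using this)

theorem map_remainderPoly {S : Type*} [CommRing S] (f : R →+* S) (w : ℕ → R) (K : ℕ) :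
    (remainderPoly p w K).map f = remainderPoly p (f ∘ w) K := by
  induction K with
  | zero => simp [remainderPoly]
  | succ K ih => simp [remainderPoly, ih]

theorem map_crossPoly {S : Type*} [CommRing S] (f : R →+* S) (w : ℕ → R) (K : ℕ) (δ : R) :
    (crossPoly p w K δ).map f = crossPoly p (f ∘ w) K (f δ) := by
  have hf : f ((remainderPoly p w K).eval δ) = (remainderPoly p (f ∘ w) K).eval (f δ) := by
    rw [← map_remainderPoly, eval_map, eval₂_at_apply]
  simp only [crossPoly, Polynomial.map_sub, Polynomial.map_mul, Polynomial.map_pow, map_C, map_X,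
    map_remainderPoly, map_mul, map_pow, hf]

end AdditivePolynomial

section ExpChar

variable {p : ℕ} [ExpChar R p]

variable (p) in
/-- The map `g_a`; `twistMap p 1` is the Artin–Schreier map. -/
def twistMap (a : R) : R →+ R :=
  AddMonoidHom.mk' (fun x => x ^ p - a ^ (p - 1) * x) fun x y => by
    rw [add_pow_expChar]; ring

variable (R p) in
def powRange (d : ℕ) : Subring R := (iterateFrobenius R p d).range

theorem twistMap_apply (a x : R) : twistMap p a x = x ^ p - a ^ (p - 1) * x := rfl

theorem twistMap_mul (a y : R) : twistMap p a (a * y) = a ^ p * (y ^ p - y) := by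
  rw [twistMap_apply, mul_pow, ← pow_sub_one_mul (expChar_ne_zero R p) a]
  ring

theorem surjective_of_forall_mul_mem_range {a r : R} (ha : IsUnit a) (hr : IsUnit r)
    (h : ∀ x, r * x ∈ (twistMap p a).range) : Function.Surjective fun x : R => x ^ p - x := by
  obtain ⟨u, rfl⟩ := hr
  obtain ⟨v, rfl⟩ := ha
  intro y
  obtain ⟨x, hx⟩ := h (↑u⁻¹ * (↑v ^ p * y))
  rw [Units.mul_inv_cancel_left] at hx
  refine ⟨↑v⁻¹ * x, (v ^ p).isUnit.mul_left_cancel ?_⟩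
  rw [Units.val_pow_eq_pow_val, ← twistMap_mul, Units.mul_inv_cancel_left, hx]

theorem pow_mem_powRange (x : R) (d : ℕ) : x ^ p ^ d ∈ powRange R p d := ⟨x, rfl⟩

theorem exists_pow_eq_of_mem_powRange {d k : ℕ} {x : R} (hx : x ∈ powRange R p d)
    (hk : k ≤ d) : ∃ v ∈ powRange R p (d - k), v ^ p ^ k = x := by
  obtain ⟨u, rfl⟩ := hx
  refine ⟨u ^ p ^ (d - k), pow_mem_powRange .., ?_⟩
  rw [iterateFrobenius_def, ← pow_mul, ← pow_add, Nat.sub_add_cancel hk]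

theorem powRange_anti {d e : ℕ} (h : e ≤ d) : powRange R p d ≤ powRange R p e := fun _ hx => by
  obtain ⟨v, -, rfl⟩ := exists_pow_eq_of_mem_powRange hx h
  exact pow_mem_powRange v e

theorem pow_sub_remExp_mul_mem_range {a β : R} {k : ℕ} (hβ : β ^ p ^ k = a ^ (p - 1)) (y : R) :
    y ^ p ^ k - β ^ remExp p k * y ∈ (twistMap p a).range := by
  induction k generalizing β y with
  | zero => simp [remExp]
  | succ k ih =>
    have hβp : (β ^ p) ^ p ^ k = a ^ (p - 1) := by rw [← pow_mul, ← pow_succ']; exact hβ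
    have key : y ^ p ^ (k + 1) - β ^ remExp p (k + 1) * y = twistMap p a (y ^ p ^ k) +
        ((β ^ p * y) ^ p ^ k - (β ^ p) ^ remExp p k * (β ^ p * y)) := by
      rw [twistMap_apply, ← hβp, remExp]; ring
    rw [key]
    exact add_mem ⟨_, rfl⟩ (ih hβp _)

theorem exists_remainder {a : R} {d K : ℕ} {w : ℕ → R} (hw : ∀ k, w k ∈ powRange R p d)
    (ha : a ^ (p - 1) ∈ powRange R p d) (hK : K ≤ d) :
    ∃ r ∈ powRange R p (d - K), r ^ p ^ K = (remainderPoly p w K).eval (a ^ (p - 1)) ∧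
      ∀ x, addPolyEval p K w x - r * x ∈ (twistMap p a).range := by
  induction K with
  | zero => exact ⟨w 0, by simpa using hw 0, by simp, fun x => by simp [addPolyEval]⟩
  | succ K ih =>
    obtain ⟨r, hr, hrK, hrx⟩ := ih (by omega)
    obtain ⟨v, hv, hvK⟩ := exists_pow_eq_of_mem_powRange (hw (K + 1)) hK
    obtain ⟨β, hβ, hβK⟩ := exists_pow_eq_of_mem_powRange ha hK
    refine ⟨r + β ^ remExp p (K + 1) * v,
      add_mem (powRange_anti (by omega) hr) (mul_mem (pow_mem hβ _) hv), ?_, fun x => ?_⟩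
    · rw [eval_remainderPoly_succ, ← hrK, ← hvK, ← hβK, add_pow_expChar_pow]
      ring
    · convert add_mem (hrx x) (pow_sub_remExp_mul_mem_range hβK (v * x)) using 1
      simp only [addPolyEval, sum_range_succ _ (K + 1), mul_pow, hvK]
      ring

theorem addPolyEval_sub_arg (K : ℕ) (w : ℕ → R) (x y : R) :
    addPolyEval p K w (x - y) = addPolyEval p K w x - addPolyEval p K w y := by
  simp only [addPolyEval, sub_pow_expChar_pow, mul_sub, sum_sub_distrib]

theorem addPolyEval_extendCoeff {K : ℕ} {w : ℕ → R} (hw : w (K + 1) = 0) (γ r z : R) :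
    addPolyEval p (K + 1) (extendCoeff p γ r w) z =
      addPolyEval p K w (r ^ (p - 1) * z ^ p - γ * z) := by
  rw [addPolyEval_sub_arg, extendCoeff, addPolyEval_sub, addPolyEval_shiftCoeff,
    addPolyEval_scaleCoeff, addPolyEval_succ_of_eq_zero hw]

theorem eval_remainderPoly_sub (w u : ℕ → R) (K : ℕ) (δ : R) :
    (remainderPoly p (w - u) K).eval δ =
      (remainderPoly p w K).eval δ - (remainderPoly p u K).eval δ := by
  induction K with
  | zero => simp
  | succ K ih => simp only [eval_remainderPoly_succ, ih, sub_pow_expChar, Pi.sub_apply]; ring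

theorem eval_remainderPoly_shiftCoeff (a : R) (w : ℕ → R) (K : ℕ) (δ : R) :
    (remainderPoly p (shiftCoeff p a w) (K + 1)).eval δ =
      δ ^ p ^ (K + 1) * a ^ p ^ K * (remainderPoly p w K).eval δ := by
  induction K with
  | zero =>
    simp [eval_remainderPoly_succ, shiftCoeff, remExp, zero_pow (expChar_ne_zero R p)]
    ring
  | succ K ih =>
    rw [eval_remainderPoly_succ, ih, eval_remainderPoly_succ, remExp_succ' (K + 1), shiftCoeff]
    ring

theorem eval_remainderPoly_extendCoeff {K : ℕ} {w : ℕ → R} (hw : w (K + 1) = 0) {γ r : R}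
    (hr : r ^ p ^ K = (remainderPoly p w K).eval γ) (δ : R) :
    (remainderPoly p (extendCoeff p γ r w) (K + 1)).eval δ = (crossPoly p w K δ).eval γ := by
  have hr' : (r ^ (p - 1)) ^ p ^ K = (remainderPoly p w K).eval γ ^ (p - 1) := by
    rw [← hr, ← pow_mul, ← pow_mul, mul_comm]
  rw [extendCoeff, eval_remainderPoly_sub, eval_remainderPoly_shiftCoeff, hr',
    eval_remainderPoly_scaleCoeff, eval_remainderPoly_succ, hw]
  simp only [crossPoly, eval_sub, eval_mul, eval_C, eval_pow, eval_X]
  ring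

variable (p) in
structure IsAdmissible (d m : ℕ) (c : ℕ → R) (s : Set ℕ) (K : ℕ) (w : ℕ → R) : Prop where
  deg_le : K ≤ m
  coeff_eq_zero : ∀ k, K < k → w k = 0
  isUnit_coeff : IsUnit (w K)
  coeff_mem : ∀ k, w k ∈ powRange R p d
  addPolyEval_mem : ∀ j ∈ s, ∀ z, addPolyEval p K w z ∈ (twistMap p (c j)).range

theorem IsAdmissible.mono {d d' m m' K : ℕ} {c c' : ℕ → R} {s t : Set ℕ} {w : ℕ → R}
    (h : IsAdmissible p d m c s K w) (hd : d' ≤ d) (hm : m ≤ m') (hts : t ⊆ s)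
    (hc : ∀ j ∈ t, c' j = c j) : IsAdmissible p d' m' c' t K w where
  deg_le := h.deg_le.trans hm
  coeff_eq_zero := h.coeff_eq_zero
  isUnit_coeff := h.isUnit_coeff
  coeff_mem k := powRange_anti hd (h.coeff_mem k)
  addPolyEval_mem j hj := hc j hj ▸ h.addPolyEval_mem j (hts hj)

theorem IsAdmissible.extend {d m K : ℕ} {c : ℕ → R} {s : Set ℕ} {w : ℕ → R} {r : R}
    (h : IsAdmissible p d m c s K w) (hc : c m ^ (p - 1) ∈ powRange R p d)
    (hr : r ∈ powRange R p (d - K)) (hru : IsUnit r)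
    (hrem : ∀ x, addPolyEval p K w x - r * x ∈ (twistMap p (c m)).range) :
    IsAdmissible p (d - K) (m + 1) c (insert m s) (K + 1) (extendCoeff p (c m ^ (p - 1)) r w) := by
  have hw := h.coeff_eq_zero (K + 1) K.lt_succ_self
  have hmem {x : R} (hx : x ∈ powRange R p d) : x ∈ powRange R p (d - K) :=
    powRange_anti (Nat.sub_le d K) hx
  refine ⟨Nat.succ_le_succ h.deg_le, fun k hk => ?_, ?_, fun k => ?_, ?_⟩
  · cases k with
    | zero => omega
    | succ k =>
      simp only [extendCoeff, Pi.sub_apply, shiftCoeff, scaleCoeff,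
        h.coeff_eq_zero k (by omega), h.coeff_eq_zero (k + 1) (by omega), mul_zero, sub_zero]
  · simp only [extendCoeff, Pi.sub_apply, shiftCoeff, scaleCoeff, hw, mul_zero, sub_zero]
    exact ((hru.pow _).pow _).mul h.isUnit_coeff
  · refine sub_mem ?_ (mul_mem (pow_mem (hmem hc) _) (hmem (h.coeff_mem k)))
    cases k with
    | zero => exact zero_mem _
    | succ k => exact mul_mem (pow_mem (pow_mem hr _) _) (hmem (h.coeff_mem k))
  · rintro j (rfl | hj) z <;> rw [addPolyEval_extendCoeff hw]
    · set y := r ^ (p - 1) * z ^ p - c j ^ (p - 1) * z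
      have hry : r * y = twistMap p (c j) (r * z) := by
        rw [twistMap_apply, mul_pow, ← mul_pow_sub_one (expChar_ne_zero R p) r]
        ring
      rw [← sub_add_cancel (addPolyEval p K w y) (r * y)]
      exact add_mem (hrem y) ⟨r * z, hry.symm⟩
    · exact h.addPolyEval_mem j hj _

theorem IsAdmissible.exists_extend {d m K : ℕ} {c : ℕ → R} {s : Set ℕ} {w : ℕ → R}
    (h : IsAdmissible p d m c s K w) (hKd : K ≤ d) (hc : c m ^ (p - 1) ∈ powRange R p d)
    (hu : IsUnit ((remainderPoly p w K).eval (c m ^ (p - 1)))) :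
    ∃ r, r ^ p ^ K = (remainderPoly p w K).eval (c m ^ (p - 1)) ∧ IsAdmissible p (d - K) (m + 1) c
      (insert m s) (K + 1) (extendCoeff p (c m ^ (p - 1)) r w) := by
  obtain ⟨r, hr, hrK, hrem⟩ := exists_remainder h.coeff_mem hc hKd
  refine ⟨r, hrK, h.extend hc hr ?_ hrem⟩
  exact (isUnit_pow_iff (pow_ne_zero K (expChar_ne_zero R p))).1 (hrK ▸ hu)

variable (p) in
/-- The depth `n * (n + 1 - m)` leaves room for the at most `n - m` remaining extensions, each of
which uses up at most `n` levels of `p`-th roots (`IsAdmissible.extend`). -/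
structure Stage (n m : ℕ) (c : ℕ → R) (K : ℕ → ℕ) (w : ℕ → ℕ → R) : Prop where
  isUnit : ∀ j < m, IsUnit (c j)
  mem_powRange : ∀ j < m, c j ∈ powRange R p (n * (n + 1))
  isAdmissible : ∀ i ≤ m, IsAdmissible p (n * (n + 1 - m)) m c {j | j < m ∧ j ≠ i} (K i) (w i)
  isUnit_eval : ∀ i < m, IsUnit ((remainderPoly p (w i) (K i)).eval (c i ^ (p - 1)))

theorem stage_zero (n : ℕ) (c : ℕ → R) : Stage p n 0 c (fun _ => 0) fun _ => Pi.single 0 1 where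
  isUnit j hj := absurd hj j.not_lt_zero
  mem_powRange j hj := absurd hj j.not_lt_zero
  isAdmissible _ _ :=
    { deg_le := le_rfl
      coeff_eq_zero k hk := Pi.single_eq_of_ne hk.ne' _
      isUnit_coeff := by simp
      coeff_mem k := by
        rcases eq_or_ne k 0 with rfl | hk
        · simp
        · simp [hk]
      addPolyEval_mem j hj := absurd hj.1 j.not_lt_zero }
  isUnit_eval i hi := absurd hi i.not_lt_zero

theorem Stage.exists_extend {n m : ℕ} (hm : m < n) {c : ℕ → R} {K : ℕ → ℕ} {w : ℕ → ℕ → R}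
    (hS : Stage p n m c K w) {a : R} (ha : a ∈ powRange R p (n * (n + 1)))
    (hu : ∀ i ≤ m, IsUnit ((remainderPoly p (w i) (K i)).eval (a ^ (p - 1)))) :
    ∃ r : ℕ → R, ∀ i ≤ m, r i ^ p ^ K i = (remainderPoly p (w i) (K i)).eval (a ^ (p - 1)) ∧
      IsAdmissible p (n * (n + 1 - (m + 1))) (m + 1) (Function.update c m a)
        (insert m {j | j < m ∧ j ≠ i}) (K i + 1) (extendCoeff p (a ^ (p - 1)) (r i) (w i)) := by
  have hd : n * (n + 1 - m) = n * (n + 1 - (m + 1)) + n := by rw [← Nat.mul_succ]; congr 1; omega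
  have hγ : Function.update c m a m ^ (p - 1) ∈ powRange R p (n * (n + 1 - m)) := by
    rw [Function.update_self]
    exact pow_mem (powRange_anti (Nat.mul_le_mul_left _ (Nat.sub_le _ _)) ha) _
  have hext (i : ℕ) : ∃ r, i ≤ m → r ^ p ^ K i = (remainderPoly p (w i) (K i)).eval (a ^ (p - 1)) ∧
      IsAdmissible p (n * (n + 1 - (m + 1))) (m + 1) (Function.update c m a)
        (insert m {j | j < m ∧ j ≠ i}) (K i + 1) (extendCoeff p (a ^ (p - 1)) r (w i)) := by
    by_cases hi : i ≤ m
    · have hadm := (hS.isAdmissible i hi).mono le_rfl le_rfl subset_rfl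
        fun j hj => Function.update_of_ne hj.1.ne a c
      obtain ⟨r, hrK, hr⟩ := hadm.exists_extend (by have := hadm.deg_le; omega) hγ
        (by rw [Function.update_self]; exact hu i hi)
      rw [Function.update_self] at hrK hr
      exact ⟨r, fun _ => ⟨hrK, hr.mono (by have := hadm.deg_le; omega) le_rfl subset_rfl
        fun _ _ => rfl⟩⟩
    · exact ⟨0, fun h => absurd h hi⟩
  choose r hr using hext
  exact ⟨r, hr⟩

end ExpChar

section LocalRing

variable {p : ℕ} [ExpChar R p] [IsLocalRing R] [Infinite (IsLocalRing.ResidueField R)]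

open IsLocalRing

theorem exists_isUnit_eval_pow {f : R[X]}
    (hf : f.map (residue R) ≠ 0) {M : ℕ} (hM : 0 < M) :
    ∃ t : R, IsUnit t ∧ IsUnit (f.eval (t ^ M)) := by
  have hg : X * expand _ M (f.map (residue R)) ≠ 0 :=
    mul_ne_zero X_ne_zero ((expand_ne_zero hM).2 hf)
  obtain ⟨x, hx⟩ : ∃ x, (X * expand _ M (f.map (residue R))).eval x ≠ 0 := by
    by_contra! h
    exact hg (zero_of_eval_zero _ h)
  rw [eval_mul, eval_X, expand_eval, mul_ne_zero_iff] at hx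
  obtain ⟨t, rfl⟩ := residue_surjective x
  refine ⟨t, (residue_ne_zero_iff_isUnit t).1 hx.1,
    (residue_ne_zero_iff_isUnit _).1 ?_⟩
  rw [← map_pow, eval_map, eval₂_at_apply] at hx
  exact hx.2

theorem Stage.exists_isUnit (hp : 1 < p) {n m : ℕ} {c : ℕ → R} {K : ℕ → ℕ} {w : ℕ → ℕ → R}
    (hS : Stage p n m c K w) : ∃ t : R, IsUnit t ∧ ∀ i ≤ m,
      IsUnit ((remainderPoly p (w i) (K i)).eval ((t ^ p ^ (n * (n + 1))) ^ (p - 1))) ∧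
      (i < m → IsUnit ((crossPoly p (w i) (K i) (c i ^ (p - 1))).eval
        ((t ^ p ^ (n * (n + 1))) ^ (p - 1)))) := by
  set F := (∏ i ∈ range (m + 1), remainderPoly p (w i) (K i)) *
    ∏ i ∈ range m, crossPoly p (w i) (K i) (c i ^ (p - 1))
  have hF : F.map (residue R) ≠ 0 := by
    simp only [F, Polynomial.map_mul, Polynomial.map_prod, map_remainderPoly, map_crossPoly]
    refine mul_ne_zero (prod_ne_zero_iff.2 fun i hi => ?_) (prod_ne_zero_iff.2 fun i hi => ?_)
    · have hi : i ≤ m := Nat.lt_succ_iff.1 (mem_range.1 hi)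
      exact remainderPoly_ne_zero (by omega)
        ((residue_ne_zero_iff_isUnit _).2 (hS.isAdmissible i hi).isUnit_coeff)
    · have hi := mem_range.1 hi
      refine crossPoly_ne_zero (by omega) ?_
      rw [← map_remainderPoly, eval_map, eval₂_at_apply, ← map_pow]
      exact (residue_ne_zero_iff_isUnit _).2 ((hS.isUnit_eval i hi).pow p)
  obtain ⟨t, ht, htF⟩ := exists_isUnit_eval_pow hF (M := p ^ (n * (n + 1)) * (p - 1))
    (Nat.mul_pos (pow_pos (by omega) _) (by omega))
  simp only [F, eval_mul, eval_prod, IsUnit.mul_iff, IsUnit.prod_iff, mem_range] at htF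
  refine ⟨t, ht, fun i hi => ⟨?_, fun him => ?_⟩⟩ <;> rw [← pow_mul]
  exacts [htF.1 i (by omega), htF.2 i him]

theorem Stage.exists_succ (hp : 1 < p) {n m : ℕ} (hm : m < n) {c : ℕ → R} {K : ℕ → ℕ}
    {w : ℕ → ℕ → R} (hS : Stage p n m c K w) :
    ∃ (c' : ℕ → R) (K' : ℕ → ℕ) (w' : ℕ → ℕ → R), Stage p n (m + 1) c' K' w' := by
  obtain ⟨t, ht, hunit⟩ := hS.exists_isUnit hp
  set a := t ^ p ^ (n * (n + 1))
  obtain ⟨r, hr⟩ := hS.exists_extend hm (pow_mem_powRange t _) fun i hi => (hunit i hi).1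
  have hc (j : ℕ) (hj : j < m) : Function.update c m a j = c j :=
    Function.update_of_ne hj.ne _ _
  -- Index `m` keeps `w m`, which omits no `j < m`; every other `i ≤ m + 1` extends `w (min i m)`.
  refine ⟨Function.update c m a, fun i => if i = m then K m else K (min i m) + 1,
    fun i => if i = m then w m else extendCoeff p (a ^ (p - 1)) (r (min i m)) (w (min i m)),
    ⟨fun j hj => ?_, fun j hj => ?_, fun i hi => ?_, fun i hi => ?_⟩⟩
  · rcases Nat.lt_succ_iff_lt_or_eq.1 hj with hj | rfl
    · exact hc j hj ▸ hS.isUnit j hj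
    · exact (Function.update_self _ a c).symm ▸ ht.pow _
  · rcases Nat.lt_succ_iff_lt_or_eq.1 hj with hj | rfl
    · exact hc j hj ▸ hS.mem_powRange j hj
    · exact (Function.update_self _ a c).symm ▸ pow_mem_powRange _ _
  · by_cases him : i = m
    · subst him
      simp only [if_true]
      exact (hS.isAdmissible i le_rfl).mono (Nat.mul_le_mul_left _ (by omega)) (by omega)
        (fun j hj => ⟨by grind, hj.2⟩) fun j hj => hc j (by grind)
    · simp only [if_neg him]
      refine (hr _ (min_le_right i m)).2.mono le_rfl le_rfl ?_ fun _ _ => rfl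
      rintro j ⟨hj, hji⟩
      by_cases hjm : j = m
      · exact Or.inl hjm
      · exact Or.inr ⟨by omega, by omega⟩
  · by_cases him : i = m
    · subst him
      simpa using (hunit i le_rfl).1
    · have hi : i < m := by omega
      simp only [if_neg him, min_eq_left hi.le]
      rw [eval_remainderPoly_extendCoeff ((hS.isAdmissible i hi.le).coeff_eq_zero _ (by omega))
        (hr i hi.le).1, hc i hi]
      exact (hunit i hi.le).2 hi

theorem exists_stage (hp : 1 < p) (n : ℕ) : ∀ m ≤ n,
    ∃ (c : ℕ → R) (K : ℕ → ℕ) (w : ℕ → ℕ → R), Stage p n m c K w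
  | 0, _ => ⟨0, _, _, stage_zero n 0⟩
  | m + 1, hm => by
    obtain ⟨c, K, w, hS⟩ := exists_stage hp n m (by omega)
    exact hS.exists_succ hp (by omega)

end LocalRing

end ArtinSchreier

open ArtinSchreier in
theorem stmt_0_general (p : ℕ) (hp : p.Prime) (R : Type*) [CommRing R] [IsLocalRing R]
    [CharP R p] (hres : Infinite (IsLocalRing.ResidueField R))
    (hBS : ∃ n : ℕ, 2 ≤ n ∧ ∀ c : Fin n → R, ∃ i : Fin n,
      (⋂ j ≠ i, Set.range (fun x : R => x ^ p - (c j) ^ (p - 1) * x)) ⊆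
        Set.range (fun x : R => x ^ p - (c i) ^ (p - 1) * x)) :
    Function.Surjective (fun x : R => x ^ p - x) := by
  have := ExpChar.prime (R := R) hp
  obtain ⟨n, -, hBS⟩ := hBS
  obtain ⟨c, K, w, hS⟩ := exists_stage (R := R) hp.one_lt n n le_rfl
  obtain ⟨i, hi⟩ := hBS fun j => c j
  have hadm := hS.isAdmissible i i.isLt.le
  rw [Nat.add_sub_cancel_left, mul_one] at hadm
  obtain ⟨r, -, hrK, hrem⟩ := exists_remainder hadm.coeff_mem
    (pow_mem (powRange_anti (Nat.le_mul_of_pos_right n (Nat.succ_pos n))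
      (hS.mem_powRange i i.isLt)) _) hadm.deg_le
  refine surjective_of_forall_mul_mem_range (hS.isUnit i i.isLt)
    ((isUnit_pow_iff (pow_ne_zero _ hp.ne_zero)).1 (hrK ▸ hS.isUnit_eval i i.isLt)) fun x => ?_
  have hx : addPolyEval p (K i) (w i) x ∈ (twistMap p (c i)).range :=
    hi (Set.mem_iInter₂.2 fun j hj => hadm.addPolyEval_mem j ⟨j.isLt, fun h => hj (Fin.ext h)⟩ x)
  simpa using sub_mem hx (hrem x)

/-- Let `p` be a prime and `R` a commutative local integral domain of
characteristic `p` with infinite residue field.  If the Baldwin–Saxl property holds for the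
family of images of the maps `g_c : x ↦ x^p - c^(p-1)*x` for some `n ≥ 2`, then the
Artin–Schreier map `x ↦ x^p - x` is surjective on `R`. -/
theorem stmt_0 (p : ℕ) (hp : p.Prime) (R : Type*) [CommRing R] [IsDomain R] [IsLocalRing R]
    [CharP R p] (hres : Infinite (IsLocalRing.ResidueField R))
    (hBS : ∃ n : ℕ, 2 ≤ n ∧ ∀ c : Fin n → R, ∃ i : Fin n,
      (⋂ j ≠ i, Set.range (fun x : R => x ^ p - (c j) ^ (p - 1) * x)) ⊆
        Set.range (fun x : R => x ^ p - (c i) ^ (p - 1) * x)) :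
    Function.Surjective (fun x : R => x ^ p - x) :=
  stmt_0_general p hp R hres hBS
end

section
/- Let R be a commutative ring with finitely many maximal ideals and finitely many minimal prime ideals, and suppose the poset of prime ideals of R (ordered by inclusion) is a forest, i.e. for every prime ideal p the set of prime ideals containing p is linearly ordered by inclusion. Then R is isomorphic, as a ring, to a finite product of local rings. -/
/-- A commutative ring with finitely many maximal ideals and finitely many
minimal primes, whose poset of prime ideals is a forest, is isomorphic to a finite product
of local rings. -/
theorem stmt_1 (R : Type) [CommRing R]
    (hmax : {I : Ideal R | I.IsMaximal}.Finite)
    (hmin : (minimalPrimes R).Finite)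
    (hforest : ∀ P Q Q' : Ideal R, P.IsPrime → Q.IsPrime → Q'.IsPrime →
      P ≤ Q → P ≤ Q' → (Q ≤ Q' ∨ Q' ≤ Q)) :
    ∃ (n : ℕ) (A : Fin n → CommRingCat.{0}),
      (∀ i, IsLocalRing (A i)) ∧ Nonempty (R ≃+* ((i : Fin n) → A i)) := by
  classical
  -- uniqueness of the maximal ideal above a prime
  have huniq : ∀ (p : PrimeSpectrum R) (m m' : Ideal R), m.IsMaximal → m'.IsMaximal →
      p.asIdeal ≤ m → p.asIdeal ≤ m' → m = m' := by
    intro p m m' hm hm' h1 h2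
    rcases hforest p.asIdeal m m' p.2 hm.isPrime hm'.isPrime h1 h2 with h | h
    · exact hm.eq_of_le hm'.ne_top h
    · exact (hm'.eq_of_le hm.ne_top h).symm
  set s := hmax.toFinset with hs
  have hmem_s : ∀ m : Ideal R, m ∈ s ↔ m.IsMaximal := fun m => hmax.mem_toFinset
  -- the "local component" sets
  set C : Ideal R → Set (PrimeSpectrum R) := fun m => {p | p.asIdeal ≤ m} with hC
  -- existence of a maximal ideal above each prime
  have hexists : ∀ p : PrimeSpectrum R, ∃ m ∈ s, p ∈ C m := by
    intro p
    obtain ⟨m, hm, hle⟩ := p.asIdeal.exists_le_maximal p.2.ne_top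
    exact ⟨m, (hmem_s m).mpr hm, hle⟩
  have hclosed : ∀ m ∈ s, IsClosed (C m) := by
    intro m hm
    rw [hmem_s] at hm
    have : C m = ⋃ q ∈ {q ∈ hmin.toFinset | q ≤ m},
        PrimeSpectrum.zeroLocus (q : Set R) := by
      ext p
      simp only [Set.mem_iUnion, PrimeSpectrum.mem_zeroLocus, Finset.mem_filter,
        Set.Finite.mem_toFinset, exists_prop]
      constructor
      · intro hpm
        haveI := p.2
        obtain ⟨q, hq, hq'⟩ := Ideal.exists_minimalPrimes_le (I := ⊥) (J := p.asIdeal) bot_le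
        exact ⟨q, ⟨hq, le_trans hq' hpm⟩, fun x hx => hq' hx⟩
      · rintro ⟨q, ⟨hqmin, hqm⟩, hqp⟩
        have hq : q.IsPrime := hqmin.1.1
        have hqp' : q ≤ p.asIdeal := fun x hx => hqp hx
        rcases hforest q p.asIdeal m hq p.2 hm.isPrime hqp' hqm with h | h
        · exact h
        · exact le_of_eq (hm.eq_of_le p.2.ne_top h).symm
    rw [this]
    exact Set.Finite.isClosed_biUnion (Finset.finite_toSet _)
      fun q _ => PrimeSpectrum.isClosed_zeroLocus _
  have hclopen : ∀ m ∈ s, IsClopen (C m) := by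
    intro m hm
    refine ⟨?_, ?_⟩
    · exact hclosed m hm
    · rw [← isClosed_compl_iff]
      have : (C m)ᶜ = ⋃ m' ∈ s.erase m, C m' := by
        ext p
        simp only [Set.mem_compl_iff, Set.mem_iUnion, Finset.mem_erase, exists_prop]
        constructor
        · intro hp
          obtain ⟨m', hm', hpm'⟩ := hexists p
          refine ⟨m', ⟨?_, hm'⟩, hpm'⟩
          rintro rfl
          exact hp hpm'
        · rintro ⟨m', ⟨hne, hm'⟩, hpm'⟩ hpm
          exact hne (huniq p m' m ((hmem_s m').mp hm') ((hmem_s m).mp hm) hpm' hpm)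
      rw [this]
      exact Set.Finite.isClosed_biUnion (Finset.finite_toSet _)
        fun m' hm' => hclosed m' (Finset.mem_of_mem_erase hm')
  -- choose idempotents
  choose E hidem hbo using fun j : s =>
    PrimeSpectrum.isClopen_iff.mp (hclopen (j : Ideal R) j.2)
  have hmemE : ∀ (j : s) (p : PrimeSpectrum R), p.asIdeal ≤ (j : Ideal R) ↔ E j ∉ p.asIdeal := by
    intro j p
    have := congrArg (p ∈ ·) (hbo j)
    simp only [eq_iff_iff] at this
    rw [show (p ∈ C (j : Ideal R)) ↔ p.asIdeal ≤ (j : Ideal R) from Iff.rfl] at this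
    rw [this]
    exact (PrimeSpectrum.mem_basicOpen _ _)
  -- if E j ∈ p for a prime p, fine; otherwise 1 - E j ∈ p
  have hone_sub : ∀ (j : s) (p : Ideal R), p.IsPrime → E j ∉ p → 1 - E j ∈ p := by
    intro j p hp hEj
    have h0 : E j * (1 - E j) = 0 := by
      rw [mul_sub, mul_one, (hidem j).eq, sub_self]
    rcases hp.mem_or_mem (h0 ▸ p.zero_mem) with h | h
    · exact absurd h hEj
    · exact h
  -- orthogonality
  have horth : ∀ i j : s, i ≠ j → E i * E j = 0 := by
    intro i j hij
    refine IsIdempotentElem.eq_zero_of_isNilpotent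
      ((hidem i).mul_of_commute (Commute.all _ _) (hidem j)) ?_
    rw [nilpotent_iff_mem_prime]
    intro J hJ
    set p : PrimeSpectrum R := ⟨J, hJ⟩
    by_cases hEi : E i ∈ J
    · exact J.mul_mem_right _ hEi
    · by_cases hEj : E j ∈ J
      · exact J.mul_mem_left _ hEj
      · exfalso
        have h1 : p.asIdeal ≤ (i : Ideal R) := (hmemE i p).mpr hEi
        have h2 : p.asIdeal ≤ (j : Ideal R) := (hmemE j p).mpr hEj
        exact hij (Subtype.ext (huniq p i j ((hmem_s _).mp i.2) ((hmem_s _).mp j.2) h1 h2))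
  -- completeness via product of (1 - e)
  have hprod : ∏ j : s, (1 - E j) = 0 := by
    refine IsIdempotentElem.eq_zero_of_isNilpotent ?_ ?_
    · show (∏ j : s, (1 - E j)) * (∏ j : s, (1 - E j)) = ∏ j : s, (1 - E j)
      rw [← Finset.prod_mul_distrib]
      exact Finset.prod_congr rfl fun j _ => (hidem j).one_sub
    · rw [nilpotent_iff_mem_prime]
      intro J hJ
      set p : PrimeSpectrum R := ⟨J, hJ⟩
      obtain ⟨m, hm, hpm⟩ := hexists p
      set jm : s := ⟨m, hm⟩
      have hEm : E jm ∉ J := (hmemE jm p).mp hpm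
      have h1 : 1 - E jm ∈ J := hone_sub jm J hJ hEm
      obtain ⟨c, hc⟩ := Finset.dvd_prod_of_mem (fun j : s => 1 - E j)
        (Finset.mem_univ jm)
      rw [hc]
      exact J.mul_mem_right _ h1
  have coi : CompleteOrthogonalIdempotents E :=
    CompleteOrthogonalIdempotents.of_prod_one_sub ⟨hidem, horth⟩ hprod
  have bij := coi.bijective_pi
  -- each quotient is local
  have hloc : ∀ j : s, IsLocalRing (R ⧸ Ideal.span {1 - E j}) := by
    intro j
    have hjmax : (j : Ideal R).IsMaximal := (hmem_s _).mp j.2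
    set J := Ideal.span {1 - E j} with hJ
    have hEj : E j ∉ (j : Ideal R) :=
      (hmemE j ⟨(j : Ideal R), hjmax.isPrime⟩).mp le_rfl
    have hJle : J ≤ (j : Ideal R) := by
      rw [hJ, Ideal.span_le, Set.singleton_subset_iff]
      exact hone_sub j _ hjmax.isPrime hEj
    set mk := Ideal.Quotient.mk J with hmk
    have hsurj : Function.Surjective mk := Ideal.Quotient.mk_surjective
    have hcomap_map : Ideal.comap mk (Ideal.map mk (j : Ideal R)) = (j : Ideal R) := by
      rw [Ideal.comap_map_of_surjective mk hsurj]
      have : Ideal.comap mk ⊥ = J := by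
        rw [← RingHom.ker_eq_comap_bot, hmk, Ideal.mk_ker]
      rw [this, sup_eq_left.mpr hJle]
    have hM0max : (Ideal.map mk (j : Ideal R)).IsMaximal := by
      rcases Ideal.map_eq_top_or_isMaximal_of_surjective mk hsurj hjmax with h | h
      · exfalso
        apply hjmax.ne_top
        rw [← hcomap_map, h, Ideal.comap_top]
      · exact h
    refine IsLocalRing.of_unique_max_ideal ⟨Ideal.map mk (j : Ideal R), hM0max, ?_⟩
    intro M hM
    haveI := hM
    have hcomapmax : (Ideal.comap mk M).IsMaximal :=
      Ideal.comap_isMaximal_of_surjective mk hsurj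
    have hJleM : J ≤ Ideal.comap mk M := by
      intro x hx
      have : mk x = 0 := Ideal.Quotient.eq_zero_iff_mem.mpr hx
      show mk x ∈ M
      rw [this]; exact M.zero_mem
    have hEnot : E j ∉ Ideal.comap mk M := by
      intro hE
      apply hcomapmax.ne_top
      rw [Ideal.eq_top_iff_one]
      have : (1 : R) = (1 - E j) + E j := by ring
      rw [this]
      exact Ideal.add_mem _ (hJleM (Ideal.subset_span rfl)) hE
    have hle : Ideal.comap mk M ≤ (j : Ideal R) :=
      (hmemE j ⟨Ideal.comap mk M, hcomapmax.isPrime⟩).mpr hEnot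
    have heq : Ideal.comap mk M = (j : Ideal R) :=
      hcomapmax.eq_of_le hjmax.ne_top hle
    rw [← Ideal.map_comap_of_surjective mk hsurj M, heq]
  -- assemble
  set σ := s.equivFin.symm with hσ
  refine ⟨s.card, fun i => CommRingCat.of (R ⧸ Ideal.span {1 - E (σ i)}),
    fun i => hloc (σ i), ⟨?_⟩⟩
  exact (RingEquiv.ofBijective _ bij).trans
    (RingEquiv.piCongrLeft (fun j : s => R ⧸ Ideal.span {1 - E j}) σ).symm
end

section
/- Let R be a commutative ring and n a positive integer such that the set of prime ideals of R is a union of n chains (subsets linearly ordered by inclusion). Then every proper radical ideal I of R is an intersection of at most n prime ideals: there exist k ≤ n and prime ideals p_1, …, p_k with I = p_1 ∩ ⋯ ∩ p_k. -/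
/-- If the prime ideals of a commutative ring `R` are covered by `n` chains
(`n > 0`), then every proper radical ideal of `R` is an intersection of at most `n` prime
ideals. -/
theorem stmt_2 (R : Type*) [CommRing R] (n : ℕ) (hn : 0 < n)
    (C : Fin n → Set (Ideal R))
    (hchain : ∀ i, IsChain (· ≤ ·) (C i))
    (hcover : {I : Ideal R | I.IsPrime} = ⋃ i, C i)
    (I : Ideal R) (hrad : I.IsRadical) (hproper : I ≠ ⊤) :
    ∃ k : ℕ, k ≤ n ∧ ∃ P : Fin k → Ideal R, (∀ i, (P i).IsPrime) ∧ I = ⨅ i, P i := by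
  -- a prime containing I exists
  obtain ⟨M, hM, hIM⟩ := Ideal.exists_le_maximal I hproper
  have hMp : M.IsPrime := hM.isPrime
  -- every element of each chain is prime
  have hCprime : ∀ i, ∀ p ∈ C i, Ideal.IsPrime p := by
    intro i p hp
    have : p ∈ ⋃ i, C i := Set.mem_iUnion.mpr ⟨i, hp⟩
    rwa [← hcover] at this
  classical
  set S : Fin n → Set (Ideal R) := fun i => {p ∈ C i | I ≤ p} with hS
  have hSchain : ∀ i, IsChain (· ≤ ·) (S i) := fun i =>
    (hchain i).mono (fun p hp => hp.1)
  set P : Fin n → Ideal R := fun i => if h : (S i).Nonempty then sInf (S i) else M with hP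
  have hPprime : ∀ i, (P i).IsPrime := by
    intro i
    simp only [hP]
    split
    · exact Ideal.sInf_isPrime_of_isChain ‹_› (hSchain i) (fun p hp => hCprime i p hp.1)
    · exact hMp
  have hIP : ∀ i, I ≤ P i := by
    intro i
    simp only [hP]
    split
    · exact le_sInf fun p hp => hp.2
    · exact hIM
  refine ⟨n, le_rfl, P, hPprime, le_antisymm (le_iInf hIP) ?_⟩
  have : I = I.radical := (hrad.radical).symm
  rw [this, Ideal.radical_eq_sInf]
  refine le_sInf fun p hp => ?_
  obtain ⟨hIp, hpprime⟩ := hp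
  have : p ∈ ⋃ i, C i := by rw [← hcover]; exact hpprime
  obtain ⟨i, hi⟩ := Set.mem_iUnion.mp this
  have hne : (S i).Nonempty := ⟨p, hi, hIp⟩
  calc ⨅ j, P j ≤ P i := iInf_le _ i
    _ ≤ p := by simp only [hP, dif_pos hne]; exact sInf_le ⟨hi, hIp⟩
end

section
/- Let R be an integral domain that is not a field and has only finitely many maximal ideals, and let K = Frac(R) be its fraction field. Then there exists a topology on K making K a Hausdorff topological field (addition, multiplication, negation, and inversion on K \ {0} are continuous), which is not the discrete topology, and in which the images in K of the non-zero ideals of R form a neighborhood basis of 0. -/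
/-!
Give `K` the topology in which the images of the non-zero ideals of `R` are the basic
neighbourhoods of `0`; it is a ring topology because `x • (b I) ⊆ I` when `x = a / b`.
It is Hausdorff once `R` has a non-zero non-unit `c`: for `x = a / b ≠ 0` the image of `(a c)`
does not contain `x`. Inversion is continuous at `x = a / b ≠ 0` as soon as the Jacobson
radical contains some `p ≠ 0`, which happens when `R` has only finitely many maximal ideals:
for `q ∈ I`, `x + a² p q = x (1 + a b p q)` and `1 + a b p q` is a unit `v`, so
`(x + a² p q)⁻¹ - x⁻¹ = -b² p q v⁻¹ ∈ I`.
-/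

open IsLocalization

instance Ideal.nonempty_ne_bot (R : Type*) [Semiring R] [Nontrivial R] :
    Nonempty {I : Ideal R // I ≠ ⊥} :=
  ⟨⟨⊤, top_ne_bot⟩⟩

theorem Ideal.jacobson_bot_ne_bot_of_finite_isMaximal {R : Type*} [CommRing R] [IsDomain R]
    (hnf : ¬ IsField R) (hmax : {I : Ideal R | I.IsMaximal}.Finite) :
    (⊥ : Ideal R).jacobson ≠ ⊥ := by
  have hprod : ∏ M ∈ hmax.toFinset, M ≠ ⊥ :=
    Finset.prod_ne_zero_iff.2 fun M hM ↦
      Ring.ne_bot_of_isMaximal_of_not_isField (hmax.mem_toFinset.1 hM) hnf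
  refine ne_bot_of_le_ne_bot hprod (le_sInf ?_)
  rintro M ⟨-, hM⟩
  exact Ideal.prod_le_inf.trans (Finset.inf_le (f := id) (hmax.mem_toFinset.2 hM))

namespace IsFractionRing

variable (R K : Type*) [CommRing R] [IsDomain R] [Field K] [Algebra R K] [IsFractionRing R K]

theorem submodulesRingBasis_coeSubmodule :
    SubmodulesRingBasis fun I : {I : Ideal R // I ≠ ⊥} ↦ coeSubmodule K I.1 where
  inter I J := ⟨⟨I.1 * J.1, mul_ne_zero I.2 J.2⟩,
    le_inf (coeSubmodule_mono K Ideal.mul_le_left) (coeSubmodule_mono K Ideal.mul_le_right)⟩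
  leftMul x I := by
    obtain ⟨a, b, hb, rfl⟩ := div_surjective (A := R) x
    refine ⟨⟨Ideal.span {b} * I.1, mul_ne_zero ?_ I.2⟩, ?_⟩
    · simpa [Ideal.span_singleton_eq_bot] using nonZeroDivisors.ne_zero hb
    rintro _ ⟨_, ⟨j, hj, rfl⟩, rfl⟩
    obtain ⟨m, hm, rfl⟩ := Ideal.mem_span_singleton_mul.1 hj
    refine ⟨a * m, I.1.mul_mem_left a hm, ?_⟩
    have hb0 : algebraMap R K b ≠ 0 := IsFractionRing.to_map_ne_zero_of_mem_nonZeroDivisors hb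
    simp only [Algebra.linearMap_apply, DistribSMul.toLinearMap_apply, smul_eq_mul, map_mul]
    field_simp
  mul I := ⟨I, fun _ ⟨_, hx, _, hy, h⟩ ↦ h ▸ coeSubmodule_mono K Ideal.mul_le_left
    (coeSubmodule_mul K I.1 I.1 ▸ Submodule.mul_mem_mul hx hy)⟩

abbrev idealTopology : TopologicalSpace K :=
  (submodulesRingBasis_coeSubmodule R K).topology

theorem isTopologicalRing_idealTopology : @IsTopologicalRing K (idealTopology R K) _ :=
  (submodulesRingBasis_coeSubmodule R K).toRing_subgroups_basis.toRingFilterBasis.isTopologicalRing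

theorem hasBasis_nhds_idealTopology (x : K) :
    (@nhds K (idealTopology R K) x).HasBasis (fun I : Ideal R ↦ I ≠ ⊥)
      fun I ↦ {y | y - x ∈ algebraMap R K '' I} :=
  ((submodulesRingBasis_coeSubmodule R K).toRing_subgroups_basis.hasBasis_nhds x).to_hasBasis
    (fun I _ ↦ ⟨I.1, I.2, subset_rfl⟩) fun I hI ↦ ⟨⟨I, hI⟩, trivial, subset_rfl⟩

theorem hasBasis_nhds_zero_idealTopology :
    (@nhds K (idealTopology R K) 0).HasBasis (fun I : Ideal R ↦ I ≠ ⊥)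
      fun I ↦ algebraMap R K '' I := by
  simpa only [sub_zero, Set.ofPred_mem_eq] using hasBasis_nhds_idealTopology R K 0

theorem idealTopology_ne_bot : idealTopology R K ≠ ⊥ := by
  intro h
  have h0 : {(0 : K)} ∈ @nhds K (idealTopology R K) 0 := by
    rw [h, @nhds_discrete K ⊥ (discreteTopology_bot K)]
    exact rfl
  obtain ⟨I, hI, hsub⟩ := (hasBasis_nhds_zero_idealTopology R K).mem_iff.1 h0
  obtain ⟨r, hr, hr0⟩ := Submodule.exists_mem_ne_zero_of_ne_bot hI
  exact hr0 (IsFractionRing.injective R K (by simpa using hsub ⟨r, hr, rfl⟩))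

theorem t2Space_idealTopology (hnf : ¬ IsField R) : @T2Space K (idealTopology R K) := by
  let := idealTopology R K
  have := isTopologicalRing_idealTopology R K
  obtain ⟨c, hc0, hc⟩ := Ring.exists_not_isUnit_of_not_isField hnf
  refine IsTopologicalAddGroup.t2Space_of_zero_sep fun x hx ↦ ?_
  obtain ⟨a, b, hb, rfl⟩ := div_surjective (A := R) x
  have ha : a ≠ 0 := by rintro rfl; simp at hx
  refine ⟨_, (hasBasis_nhds_zero_idealTopology R K).mem_of_mem
    (i := Ideal.span {a * c}) (by simpa [Ideal.span_singleton_eq_bot] using ⟨ha, hc0⟩), ?_⟩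
  rintro ⟨_, hy, hxy⟩
  obtain ⟨d, rfl⟩ := Ideal.mem_span_singleton'.1 hy
  have hb0 : algebraMap R K b ≠ 0 := IsFractionRing.to_map_ne_zero_of_mem_nonZeroDivisors hb
  have hdbc : a * (d * b * c) = a * 1 := by
    apply IsFractionRing.injective R K
    rw [eq_div_iff hb0] at hxy
    simp only [map_mul, map_one] at hxy ⊢
    linear_combination hxy
  exact hc (IsUnit.of_mul_eq_one_right _ (mul_left_cancel₀ ha hdbc))

theorem exists_inv_add_sub_inv_mem {p : R} (hp : p ∈ (⊥ : Ideal R).jacobson) (hp0 : p ≠ 0)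
    {x : K} (hx : x ≠ 0) {I : Ideal R} (hI : I ≠ ⊥) :
    ∃ J : Ideal R, J ≠ ⊥ ∧
      ∀ q ∈ J, (x + algebraMap R K q)⁻¹ - x⁻¹ ∈ algebraMap R K '' I := by
  obtain ⟨a, b, hb, rfl⟩ := div_surjective (A := R) x
  have ha : a ≠ 0 := by rintro rfl; simp at hx
  have ha0 : algebraMap R K a ≠ 0 := (map_ne_zero_iff _ (IsFractionRing.injective R K)).2 ha
  have hb0 : algebraMap R K b ≠ 0 := IsFractionRing.to_map_ne_zero_of_mem_nonZeroDivisors hb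
  refine ⟨Ideal.span {a ^ 2 * p} * I,
    mul_ne_zero (by simpa [Ideal.span_singleton_eq_bot] using ⟨ha, hp0⟩) hI, fun _ hq ↦ ?_⟩
  obtain ⟨q, hqI, rfl⟩ := Ideal.mem_span_singleton_mul.1 hq
  obtain ⟨v, hv⟩ := Ideal.mem_jacobson_bot.1 hp (a * b * q)
  refine ⟨-(b ^ 2 * p * q * ↑v⁻¹),
    I.neg_mem (I.mul_mem_right _ (I.mul_mem_left _ hqI)), ?_⟩
  have hvK : algebraMap R K (p * (a * b * q) + 1) * algebraMap R K ↑v⁻¹ = 1 := by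
    rw [← hv, ← map_mul, v.mul_inv, map_one]
  simp only [map_mul, map_add, map_neg, map_pow, map_one] at hvK ⊢
  rw [inv_eq_of_mul_eq_one_right
    (b := algebraMap R K b / algebraMap R K a * algebraMap R K ↑v⁻¹)]
  · field_simp
    linear_combination -hvK
  · field_simp
    linear_combination hvK

theorem continuousAt_inv_idealTopology (hJ : (⊥ : Ideal R).jacobson ≠ ⊥) {x : K}
    (hx : x ≠ 0) :
    @ContinuousAt K K (idealTopology R K) (idealTopology R K) (·⁻¹) x := by
  obtain ⟨p, hp, hp0⟩ := Submodule.exists_mem_ne_zero_of_ne_bot hJ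
  refine ((hasBasis_nhds_idealTopology R K x).tendsto_iff
    (hasBasis_nhds_idealTopology R K x⁻¹)).2 fun I hI ↦ ?_
  obtain ⟨J, hJ0, hJI⟩ := exists_inv_add_sub_inv_mem R K hp hp0 hx hI
  refine ⟨J, hJ0, ?_⟩
  rintro y ⟨q, hq, hqy⟩
  simpa [hqy] using hJI q hq

end IsFractionRing

/-- If `R` is an integral domain, not a field, with finitely many maximal
ideals, then its fraction field `K` carries a non-discrete Hausdorff field topology in
which the images of the non-zero ideals of `R` form a neighborhood basis of `0`. -/
theorem stmt_4 (R : Type*) [CommRing R] [IsDomain R] (hnf : ¬ IsField R)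
    (hmax : {I : Ideal R | I.IsMaximal}.Finite) :
    ∃ t : TopologicalSpace (FractionRing R),
      @T2Space (FractionRing R) t ∧
      @IsTopologicalRing (FractionRing R) t _ ∧
      (∀ x : FractionRing R, x ≠ 0 →
        @ContinuousAt (FractionRing R) (FractionRing R) t t (fun y => y⁻¹) x) ∧
      t ≠ ⊥ ∧
      (@nhds (FractionRing R) t 0).HasBasis (fun I : Ideal R => I ≠ ⊥)
        (fun I : Ideal R => algebraMap R (FractionRing R) '' (I : Set R)) :=
  ⟨IsFractionRing.idealTopology R _, IsFractionRing.t2Space_idealTopology R _ hnf,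
    IsFractionRing.isTopologicalRing_idealTopology R _,
    fun _ ↦ IsFractionRing.continuousAt_inv_idealTopology R _
      (Ideal.jacobson_bot_ne_bot_of_finite_isMaximal hnf hmax),
    IsFractionRing.idealTopology_ne_bot R _, IsFractionRing.hasBasis_nhds_zero_idealTopology R _⟩
end

section
/- Let K be a field of prime characteristic p, and let V_1 ⊆ V_2 be finite additive subgroups of K with |V_2| = p·|V_1|. Write f_{V_1}(X) = ∏_{a ∈ V_1}(X − a) and f_{V_2}(X) = ∏_{a ∈ V_2}(X − a), and assume the map x ↦ f_{V_1}(x) is an additive group homomorphism of K. Then for any a ∈ V_2 \ V_1, setting c = f_{V_1}(a), one has f_{V_2}(x) = f_{V_1}(x)^p − c^(p−1)·f_{V_1}(x) for all x ∈ K; in particular x ↦ f_{V_2}(x) is also an additive group homomorphism of K. -/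
/-!
Since `V₁` has prime index `p` in `V₂`, the group `V₂` is the disjoint union of the cosets
`V₁ + i • a`, `0 ≤ i < p`. Additivity of `f_{V₁}` turns the product over the coset `V₁ + i • a`
into `f_{V₁}(x) - i c`, and `∏_{i<p} (y - i c) = y ^ p - c ^ (p - 1) y` follows by scaling
`X ^ p - X = ∏_{z ∈ 𝔽_p} (X - z)`. Additivity of `f_{V₂}` is then that of
`y ↦ y ^ p - c ^ (p - 1) y`.
-/

open Finset Polynomial

theorem ZMod.prod_X_sub_C_eq_X_pow_sub_X (p : ℕ) [Fact p.Prime] :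
    ∏ z : ZMod p, (X - C z) = (X ^ p - X : (ZMod p)[X]) := by
  have hroots := FiniteField.roots_X_pow_card_sub_X (ZMod p)
  rw [ZMod.card] at hroots
  have hmonic : (X ^ p - X : (ZMod p)[X]).Monic :=
    (monic_X_pow p).sub_of_left <| by
      rw [degree_X_pow, degree_X]; exact_mod_cast (Fact.out : p.Prime).one_lt
  have hdeg := FiniteField.X_pow_card_sub_X_natDegree_eq (ZMod p) (Fact.out : p.Prime).one_lt
  have := prod_multiset_X_sub_C_of_monic_of_roots_card_eq hmonic (by simp [hroots, hdeg])
  rwa [hroots] at this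

theorem prod_range_sub_natCast (p : ℕ) [Fact p.Prime] {R : Type*} [CommRing R] [CharP R p]
    (t : R) : ∏ i ∈ range p, (t - i) = t ^ p - t := by
  obtain ⟨n, rfl⟩ : ∃ n, p = n + 1 := Nat.exists_eq_add_one.mpr (Fact.out : p.Prime).pos
  have := congrArg (fun q => (q.map (ZMod.castHom dvd_rfl R)).eval t)
    (ZMod.prod_X_sub_C_eq_X_pow_sub_X (n + 1))
  simp only [Polynomial.map_prod, Polynomial.map_sub, Polynomial.map_pow, map_X, map_C,
    eval_prod, eval_sub, eval_pow, eval_X, eval_C, ZMod.castHom_apply, ZMod.cast_eq_val] at this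
  rw [← this]
  exact (Fin.prod_univ_eq_prod_range (fun i => t - i) (n + 1)).symm

theorem prod_range_sub_natCast_mul (p : ℕ) [Fact p.Prime] {K : Type*} [Field K] [CharP K p]
    (c y : K) : ∏ i ∈ range p, (y - i * c) = y ^ p - c ^ (p - 1) * y := by
  have hp := (Fact.out : p.Prime).one_lt
  rcases eq_or_ne c 0 with rfl | hc
  · simp [zero_pow (Nat.sub_ne_zero_of_lt hp)]
  calc ∏ i ∈ range p, (y - i * c) = ∏ i ∈ range p, (c * (y / c - i)) :=
        prod_congr rfl fun i _ => by field_simp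
    _ = c ^ p * ((y / c) ^ p - y / c) := by
        rw [prod_mul_distrib, prod_const, card_range, prod_range_sub_natCast]
    _ = y ^ p - c ^ (p - 1) * y := by
        rw [mul_sub, ← mul_pow, mul_div_cancel₀ _ hc, ← pow_sub_one_mul (by omega : p ≠ 0) c,
          mul_assoc, mul_div_cancel₀ _ hc]

namespace AddSubgroup

variable {G : Type*} [AddCommGroup G] {V₁ V₂ : AddSubgroup G} {p : ℕ} {a : G}

theorem nsmul_mem_of_card_eq_mul (hV₁ : (V₁ : Set G).Finite) (hle : V₁ ≤ V₂)
    (hcard : Nat.card V₂ = p * Nat.card V₁) (ha : a ∈ V₂) : p • a ∈ V₁ := by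
  have : Finite V₁ := hV₁
  have hindex : (V₁.addSubgroupOf V₂).index = p := by
    have h := (V₁.addSubgroupOf V₂).card_mul_index
    rw [Nat.card_congr (addSubgroupOfEquivOfLe hle).toEquiv, hcard, mul_comm p] at h
    exact Nat.eq_of_mul_eq_mul_left Nat.card_pos h
  have := (V₁.addSubgroupOf V₂).nsmul_index_mem ⟨a, ha⟩
  rwa [hindex, mem_addSubgroupOf] at this

theorem injOn_add_nsmul (hp : p.Prime) (hpa : p • a ∈ V₁) (ha : a ∉ V₁) :
    Set.InjOn (fun q : ℕ × G => q.2 + q.1 • a) (Set.Iio p ×ˢ V₁) := by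
  have : Fact p.Prime := ⟨hp⟩
  have horder : addOrderOf (a : G ⧸ V₁) = p := by
    apply addOrderOf_eq_prime
    · rwa [← QuotientAddGroup.mk_nsmul, QuotientAddGroup.eq_zero_iff]
    · rwa [ne_eq, QuotientAddGroup.eq_zero_iff]
  rintro ⟨i, v⟩ ⟨hi, hv⟩ ⟨j, w⟩ ⟨hj, hw⟩ h
  simp only at h
  have hij : i = j := by
    refine nsmul_injOn_Iio_addOrderOf (x := (a : G ⧸ V₁)) (by rwa [horder]) (by rwa [horder]) ?_
    simp only [← QuotientAddGroup.mk_nsmul, QuotientAddGroup.eq_iff_sub_mem]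
    convert V₁.sub_mem hw hv using 1
    rw [sub_eq_sub_iff_add_eq_add, add_comm, h]
  subst hij
  simp [add_right_cancel h]

theorem prod_toFinset_eq_prod_range_prod {M : Type*} [CommMonoid M] (hp : p.Prime)
    (hV₁ : (V₁ : Set G).Finite) (hV₂ : (V₂ : Set G).Finite) (hle : V₁ ≤ V₂)
    (hcard : Nat.card V₂ = p * Nat.card V₁) (ha₂ : a ∈ V₂) (ha₁ : a ∉ V₁) (g : G → M) :
    ∏ b ∈ hV₂.toFinset, g b = ∏ i ∈ range p, ∏ v ∈ hV₁.toFinset, g (v + i • a) := by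
  classical
  have hinj : Set.InjOn (fun q : ℕ × G => q.2 + q.1 • a) ↑(range p ×ˢ hV₁.toFinset) := by
    simpa using injOn_add_nsmul hp (nsmul_mem_of_card_eq_mul hV₁ hle hcard ha₂) ha₁
  have himage : (range p ×ˢ hV₁.toFinset).image (fun q => q.2 + q.1 • a) = hV₂.toFinset := by
    refine eq_of_subset_of_card_le ?_ ?_
    · simp only [subset_iff, mem_image, mem_product, mem_range, Set.Finite.mem_toFinset]
      rintro _ ⟨⟨i, v⟩, ⟨-, hv⟩, rfl⟩
      exact add_mem (hle hv) (nsmul_mem ha₂ i)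
    · rw [card_image_of_injOn hinj, card_product, card_range, ← Nat.card_eq_card_finite_toFinset,
        ← Nat.card_eq_card_finite_toFinset]
      exact hcard.le
  rw [← himage, prod_image hinj, prod_product]

end AddSubgroup

/-- Let `K` be a field of prime characteristic `p`, and `V₁ ⊆ V₂` finite
additive subgroups of `K` with `|V₂| = p·|V₁|`.  If `f_{V₁}(x) = ∏_{a ∈ V₁} (x - a)` is
additive, then for any `a ∈ V₂ \ V₁`, setting `c = f_{V₁}(a)`, one has
`f_{V₂}(x) = f_{V₁}(x)^p - c^(p-1)·f_{V₁}(x)` for all `x`; in particular `f_{V₂}` is also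
additive. -/
theorem stmt_6 (p : ℕ) (hp : p.Prime) (K : Type*) [Field K] [CharP K p]
    (V₁ V₂ : AddSubgroup K) (hV₁ : (V₁ : Set K).Finite) (hV₂ : (V₂ : Set K).Finite)
    (hle : V₁ ≤ V₂) (hcard : Nat.card V₂ = p * Nat.card V₁)
    (hadd : ∀ x y : K, (∏ a ∈ hV₁.toFinset, (x + y - a)) =
      (∏ a ∈ hV₁.toFinset, (x - a)) + (∏ a ∈ hV₁.toFinset, (y - a))) :
    ∀ a : K, a ∈ V₂ → a ∉ V₁ →
      ((∀ x : K, (∏ b ∈ hV₂.toFinset, (x - b)) =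
          (∏ b ∈ hV₁.toFinset, (x - b)) ^ p -
            (∏ b ∈ hV₁.toFinset, (a - b)) ^ (p - 1) * (∏ b ∈ hV₁.toFinset, (x - b))) ∧
        (∀ x y : K, (∏ b ∈ hV₂.toFinset, (x + y - b)) =
          (∏ b ∈ hV₂.toFinset, (x - b)) + (∏ b ∈ hV₂.toFinset, (y - b)))) := by
  intro a ha₂ ha₁
  have : Fact p.Prime := ⟨hp⟩
  let f : K →+ K := AddMonoidHom.mk' (fun x => ∏ b ∈ hV₁.toFinset, (x - b)) hadd
  have hf : ∀ x, ∏ b ∈ hV₂.toFinset, (x - b) = f x ^ p - f a ^ (p - 1) * f x := fun x =>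
    calc ∏ b ∈ hV₂.toFinset, (x - b)
        = ∏ i ∈ range p, ∏ v ∈ hV₁.toFinset, (x - (v + i • a)) :=
          AddSubgroup.prod_toFinset_eq_prod_range_prod hp hV₁ hV₂ hle hcard ha₂ ha₁ _
      _ = ∏ i ∈ range p, f (x - i • a) := by simp_rw [sub_add_eq_sub_sub_swap]; rfl
      _ = ∏ i ∈ range p, (f x - i * f a) := by simp_rw [map_sub, map_nsmul, nsmul_eq_mul]
      _ = f x ^ p - f a ^ (p - 1) * f x := prod_range_sub_natCast_mul p (f a) (f x)
  refine ⟨hf, fun x y => ?_⟩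
  rw [hf, hf, hf, map_add, add_pow_char]
  ring
end

section
/- Let K be a field of prime characteristic p and let V be a finite additive subgroup of K. Then the map x ↦ f_V(x) = ∏_{a ∈ V}(x − a) is an additive group homomorphism from K to K whose kernel is exactly V. -/
open Polynomial Finset

/-- For a finite additive subgroup `V` of a field `K` of prime
characteristic `p`, the map `x ↦ ∏_{a ∈ V} (x - a)` is an additive group homomorphism
from `K` to `K` whose kernel is exactly `V`. -/
theorem stmt_7 (p : ℕ) (hp : p.Prime) (K : Type*) [Field K] [CharP K p]
    (V : AddSubgroup K) (hV : (V : Set K).Finite) :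
    (∀ x y : K, (∏ a ∈ hV.toFinset, (x + y - a)) =
        (∏ a ∈ hV.toFinset, (x - a)) + (∏ a ∈ hV.toFinset, (y - a))) ∧
    (∀ x : K, (∏ a ∈ hV.toFinset, (x - a)) = 0 ↔ x ∈ V) := by
  classical
  set s := hV.toFinset with hs
  have hmem : ∀ a : K, a ∈ s ↔ a ∈ V := by
    intro a; simp [hs]
  have hcard : 0 < #s := Finset.card_pos.2 ⟨0, (hmem 0).2 V.zero_mem⟩
  -- translation invariance
  have htrans : ∀ x ∈ s, ∀ y : K, (∏ a ∈ s, (x + y - a)) = ∏ a ∈ s, (y - a) := by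
    intro x hx y
    refine Finset.prod_nbij' (fun a => a - x) (fun a => a + x) ?_ ?_ ?_ ?_ ?_
    · intro a ha; exact (hmem _).2 (V.sub_mem ((hmem _).1 ha) ((hmem _).1 hx))
    · intro a ha; exact (hmem _).2 (V.add_mem ((hmem _).1 ha) ((hmem _).1 hx))
    · intro a _; ring
    · intro a _; ring
    · intro a _; ring_nf
  -- polynomial
  set F : K[X] := ∏ a ∈ s, (X - C a) with hF
  have hFm : F.Monic := monic_prod_of_monic _ _ fun a _ => monic_X_sub_C a
  have hFdeg : F.natDegree = #s := by
    simpa [hF] using natDegree_prod_of_monic s (fun a => X - C a) fun a _ => monic_X_sub_C a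
  have hFeval : ∀ x : K, F.eval x = ∏ a ∈ s, (x - a) := by
    intro x; simp [hF, eval_prod]
  constructor
  · intro x y
    set G : K[X] := F.comp (X + C y) - F - C (F.eval y) with hG
    have hcomp : (F.comp (X + C y)).Monic := by
      apply hFm.comp (monic_X_add_C y)
      simp [natDegree_X_add_C]
    have hndeq : (F.comp (X + C y)).natDegree = F.natDegree := by
      rw [natDegree_comp]; simp [natDegree_X_add_C]
    have hdeq : (F.comp (X + C y)).degree = F.degree := by
      rw [degree_eq_natDegree hcomp.ne_zero, degree_eq_natDegree hFm.ne_zero, hndeq]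
    have hd1 : (F.comp (X + C y) - F).degree < F.degree := by
      rw [← hdeq]
      exact degree_sub_lt hdeq hcomp.ne_zero (by rw [hcomp.leadingCoeff, hFm.leadingCoeff])
    have hFdeg' : F.degree = (#s : ℕ) := by
      rw [degree_eq_natDegree hFm.ne_zero, hFdeg]
    have hGdeglt : G.degree < (#s : ℕ) := by
      rw [hG]
      refine lt_of_le_of_lt (degree_sub_le _ _) (max_lt ?_ ?_)
      · rw [← hFdeg']; exact hd1
      · exact lt_of_le_of_lt (degree_C_le) (by exact_mod_cast WithBot.coe_lt_coe.2 hcard)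
    have hGz : G = 0 := by
      by_cases h0 : G = 0
      · exact h0
      apply eq_zero_of_natDegree_lt_card_of_eval_eq_zero' G s _
        ((natDegree_lt_iff_degree_lt h0).2 hGdeglt)
      intro a ha
      have h1 : F.eval (a + y) = F.eval y := by
        rw [hFeval, hFeval]; exact htrans a ha y
      have h2 : F.eval a = 0 := by
        rw [hFeval]
        exact Finset.prod_eq_zero ha (by ring)
      simp [hG, eval_comp, h1, h2]
    have := congrArg (Polynomial.eval x) hGz
    simp only [hG, eval_sub, eval_comp, eval_add, eval_X, eval_C, eval_zero] at this
    rw [hFeval, hFeval, hFeval] at this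
    linear_combination this

  · intro x
    rw [Finset.prod_eq_zero_iff]
    constructor
    · rintro ⟨a, ha, hxa⟩
      have : x = a := sub_eq_zero.1 hxa
      exact this ▸ (hmem a).1 ha
    · intro hx; exact ⟨x, (hmem x).2 hx, by ring⟩
end

section
/- Let p be a prime and let R be an integral domain of characteristic p having exactly two maximal ideals m_1 and m_2 (m_1 ≠ m_2). Suppose that for i = 1, 2 the Artin–Schreier map x ↦ x^p − x is a surjection from the localization R_{m_i} onto itself. Then the Artin–Schreier map x ↦ x^p − x is a surjection from R onto R. -/
/-!
View both localizations inside the fraction field `K` of `R`. Given `y ∈ R`, pick Artin–Schreier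
preimages `u₁ ∈ R_{m₁}` and `u₂ ∈ R_{m₂}` of `y`. Their difference is fixed by Frobenius, hence
lies in the prime field `𝔽_p ⊆ R`, so `u₁ = u₂ + (u₁ - u₂)` lies in both localizations. An integral
domain is the intersection of its localizations at its maximal ideals, so `u₁ ∈ R`.
-/

open Function

theorem exists_pow_sub_self_eq_algebraMap_of_surjective {R : Type*} [CommRing R]
    {S : Submonoid R} (hS : S ≤ nonZeroDivisors R) (K : Type*) [Field K] [Algebra R K]
    [IsFractionRing R K] (A : Type*) [CommRing A] [Algebra R A] [IsLocalization S A] (n : ℕ)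
    (hA : Surjective fun x : A => x ^ n - x) (y : R) :
    ∃ u ∈ Localization.subalgebra.ofField K S hS, u ^ n - u = algebraMap R K y := by
  let e := IsLocalization.algEquiv S A (Localization.subalgebra.ofField K S hS)
  obtain ⟨x, hx⟩ := hA (algebraMap R A y)
  refine ⟨e x, (e x).2, ?_⟩
  simpa using congrArg (fun a => (e a : K)) hx

theorem MaximalSpectrum.exists_algebraMap_eq_of_forall_mem_ofField {R : Type*} [CommRing R]
    [IsDomain R] {K : Type*} [Field K] [Algebra R K] [IsFractionRing R K] {x : K}
    (hx : ∀ (m : Ideal R) [m.IsMaximal],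
      x ∈ Localization.subalgebra.ofField K m.primeCompl m.primeCompl_le_nonZeroDivisors) :
    ∃ r : R, algebraMap R K r = x := by
  rw [← Set.mem_range, ← Algebra.mem_bot, ← iInf_localization_eq_bot R K, Algebra.mem_iInf]
  exact fun v => hx v.asIdeal

theorem stmt_8_general (p : ℕ) (hp : p.Prime) (R : Type*) [CommRing R] [IsDomain R] [CharP R p]
    (m₁ m₂ : Ideal R) [m₁.IsMaximal] [m₂.IsMaximal]
    (hall : ∀ m : Ideal R, m.IsMaximal → m = m₁ ∨ m = m₂)
    (hs₁ : Function.Surjective (fun x : Localization.AtPrime m₁ => x ^ p - x))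
    (hs₂ : Function.Surjective (fun x : Localization.AtPrime m₂ => x ^ p - x)) :
    Function.Surjective (fun x : R => x ^ p - x) := by
  have := Fact.mk hp
  let K := FractionRing R
  have : CharP K p := charP_of_injective_algebraMap (IsFractionRing.injective R K) p
  intro y
  obtain ⟨u₁, hu₁, hAS₁⟩ :=
    exists_pow_sub_self_eq_algebraMap_of_surjective m₁.primeCompl_le_nonZeroDivisors K
      (Localization.AtPrime m₁) p hs₁ y
  obtain ⟨u₂, hu₂, hAS₂⟩ :=
    exists_pow_sub_self_eq_algebraMap_of_surjective m₂.primeCompl_le_nonZeroDivisors K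
      (Localization.AtPrime m₂) p hs₂ y
  have hfix : (u₁ - u₂) ^ p = u₁ - u₂ := by
    rw [sub_pow_char]
    linear_combination hAS₁ - hAS₂
  obtain ⟨k, hk⟩ := (mem_bot_iff_intCast p K).1 ((Subfield.mem_bot_iff_pow_eq_self K p).2 hfix)
  have hu₁_mem₂ := add_mem hu₂ (intCast_mem _ k)
  rw [hk, add_sub_cancel] at hu₁_mem₂
  obtain ⟨x, rfl⟩ : ∃ x : R, algebraMap R K x = u₁ := by
    refine MaximalSpectrum.exists_algebraMap_eq_of_forall_mem_ofField fun m hm => ?_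
    rcases hall m hm with rfl | rfl
    exacts [hu₁, hu₁_mem₂]
  refine ⟨x, IsFractionRing.injective R K ?_⟩
  simpa using hAS₁

/-- Let `R` be an integral domain of characteristic `p` with exactly two
maximal ideals `m₁ ≠ m₂`.  If the Artin–Schreier map is surjective on both localizations
`R_{m₁}` and `R_{m₂}`, then it is surjective on `R`. -/
theorem stmt_8 (p : ℕ) (hp : p.Prime) (R : Type*) [CommRing R] [IsDomain R] [CharP R p]
    (m₁ m₂ : Ideal R) [m₁.IsMaximal] [m₂.IsMaximal] (hne : m₁ ≠ m₂)
    (hall : ∀ m : Ideal R, m.IsMaximal → m = m₁ ∨ m = m₂)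
    (hs₁ : Function.Surjective (fun x : Localization.AtPrime m₁ => x ^ p - x))
    (hs₂ : Function.Surjective (fun x : Localization.AtPrime m₂ => x ^ p - x)) :
    Function.Surjective (fun x : R => x ^ p - x) :=
  stmt_8_general p hp R m₁ m₂ hall hs₁ hs₂
end

section
/- Let R be an integral domain having exactly two maximal ideals m_1 and m_2 (m_1 ≠ m_2). Suppose there are elements a, a' ∈ R such that a ∈ m_1, 1 − a ∈ m_2, a' ∈ m_1, a' ∉ m_2, and a' divides no power a^n of a (n ≥ 0). Then there exists a non-maximal prime ideal p of R with a' ∈ p, p strictly contained in m_1, and p not contained in m_2. -/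
/-- Let `R` be an integral domain with exactly two maximal ideals
`m₁ ≠ m₂`, and `a, a' ∈ R` with `a ∈ m₁`, `1 - a ∈ m₂`, `a' ∈ m₁`, `a' ∉ m₂`, and `a'`
dividing no power of `a`.  Then there is a non-maximal prime `P` with `a' ∈ P`,
`P ⊊ m₁`, and `P ⊄ m₂`. -/
theorem stmt_14 (R : Type*) [CommRing R] [IsDomain R]
    (m₁ m₂ : Ideal R) (h₁ : m₁.IsMaximal) (h₂ : m₂.IsMaximal) (hne : m₁ ≠ m₂)
    (hall : ∀ m : Ideal R, m.IsMaximal → m = m₁ ∨ m = m₂)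
    (a a' : R) (ha1 : a ∈ m₁) (ha2 : 1 - a ∈ m₂)
    (ha'1 : a' ∈ m₁) (ha'2 : a' ∉ m₂) (hdvd : ∀ n : ℕ, ¬ a' ∣ a ^ n) :
    ∃ P : Ideal R, P.IsPrime ∧ ¬ P.IsMaximal ∧ a' ∈ P ∧ P < m₁ ∧ ¬ P ≤ m₂ := by
  have hdisj : Disjoint ((Ideal.span {a'} : Ideal R) : Set R) (Submonoid.powers a : Set R) := by
    rw [Set.disjoint_left]
    rintro x hx ⟨n, rfl⟩
    exact hdvd n (Ideal.mem_span_singleton.mp hx)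
  obtain ⟨P, hP, hle, hPdisj⟩ := Ideal.exists_le_prime_disjoint _ _ hdisj
  have ha'P : a' ∈ P := hle (Ideal.mem_span_singleton_self a')
  have haP : a ∉ P := fun h => Set.disjoint_left.mp hPdisj h ⟨1, pow_one a⟩
  -- P is contained in a maximal ideal
  obtain ⟨m, hm, hPm⟩ := P.exists_le_maximal hP.ne_top
  have hPm₁ : P ≤ m₁ := by
    rcases hall m hm with rfl | rfl
    · exact hPm
    · exact absurd (hPm ha'P) ha'2
  have hnotmax : ¬ P.IsMaximal := by
    intro hmax
    rcases hall P hmax with rfl | rfl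
    · exact haP ha1
    · exact ha'2 ha'P
  refine ⟨P, hP, hnotmax, ha'P, lt_of_le_of_ne hPm₁ ?_, fun h => ha'2 (h ha'P)⟩
  rintro rfl; exact hnotmax h₁
end
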